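/- arXiv:2602.08738 — 2 statements merged into one kernel-verified Lean document; each statement's English description precedes it below -/
import Mathlib

section
/- Let f be an n-oddomorphism of a finite simple graph G, let i ≠ j be two colours, and let C be a cycle in the bipartite subgraph G[C_i, C_j]. Then f is also an n-oddomorphism of the graph G − E(C) obtained from G by deleting all edges of C. -/
open SimpleGraph

/-- `G` contains `H` as an immersion: an injective map `φ : V(H) → V(G)` together with a
family of pairwise edge-disjoint paths in `G`, one path with endpoints `φ u` and `φ v`
for each edge `uv` of `H`. -/
def ContainsImmersion {V W : Type*} (G : SimpleGraph V) (H : SimpleGraph W) : Prop :=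
  ∃ φ : W ↪ V, ∃ P : ∀ u v : W, H.Adj u v → G.Walk (φ u) (φ v),
    (∀ u v (h : H.Adj u v), (P u v h).IsPath) ∧
    (∀ u v (h : H.Adj u v) u' v' (h' : H.Adj u' v'),
      s(u, v) ≠ s(u', v') → ∀ e ∈ (P u v h).edges, e ∉ (P u' v' h').edges)

/-- A vertex `u` is `f`-odd: for every colour `c ≠ f u`, the number of neighbours of `u`
coloured `c` is odd. -/
def FOdd {V : Type*} {n : ℕ} (G : SimpleGraph V) (f : V → Fin n) (u : V) : Prop :=
  ∀ c : Fin n, c ≠ f u → Odd (Nat.card {w : V // G.Adj u w ∧ f w = c})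

/-- A vertex `u` is `f`-even: for every colour `c ≠ f u`, the number of neighbours of `u`
coloured `c` is even. -/
def FEven {V : Type*} {n : ℕ} (G : SimpleGraph V) (f : V → Fin n) (u : V) : Prop :=
  ∀ c : Fin n, c ≠ f u → Even (Nat.card {w : V // G.Adj u w ∧ f w = c})

/-- `f` is an `n`-oddomorphism of `G`: a proper `n`-colouring such that every vertex is
`f`-odd or `f`-even, and every colour class contains an odd number of `f`-odd vertices. -/
def IsOddomorphism {V : Type*} (G : SimpleGraph V) (n : ℕ) (f : V → Fin n) : Prop :=
  (∀ u w : V, G.Adj u w → f u ≠ f w) ∧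
  (∀ u : V, FOdd G f u ∨ FEven G f u) ∧
  (∀ c : Fin n, Odd (Nat.card {u : V // f u = c ∧ FOdd G f u}))

/-- The graph obtained from `G` by identifying `u₁` and `u₂` into the single vertex `u₁`,
whose neighbourhood is the symmetric difference `N(u₁) Δ N(u₂)`. -/
def mergedGraph {V : Type*} (G : SimpleGraph V) (u₁ u₂ : V) :
    SimpleGraph {v : V // v ≠ u₂} where
  Adj a b := a ≠ b ∧
    ((a.val = u₁ ∧ Xor' (G.Adj u₁ b.val) (G.Adj u₂ b.val)) ∨
     (b.val = u₁ ∧ Xor' (G.Adj u₁ a.val) (G.Adj u₂ a.val)) ∨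
     (a.val ≠ u₁ ∧ b.val ≠ u₁ ∧ G.Adj a.val b.val))
  symm := by
    constructor
    rintro a b ⟨hab, h⟩
    refine ⟨hab.symm, ?_⟩
    rcases h with ⟨h1, h2⟩ | ⟨h1, h2⟩ | ⟨h1, h2, h3⟩
    · exact Or.inr (Or.inl ⟨h1, h2⟩)
    · exact Or.inl ⟨h1, h2⟩
    · exact Or.inr (Or.inr ⟨h2, h1, h3.symm⟩)
  loopless := ⟨fun a h => h.1 rfl⟩

/-- The `Ps`-merger of `u₁` and `u₂`: identify `u₁` and `u₂` into a single vertex whose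
neighbourhood is the symmetric difference of the two neighbourhoods, then delete all the
edges of the paths in `Ps`. -/
noncomputable def PMerger {V : Type*} (G : SimpleGraph V) {u₁ u₂ : V} (hne : u₁ ≠ u₂)
    (Ps : Set (G.Walk u₁ u₂)) : SimpleGraph {v : V // v ≠ u₂} :=
  letI := Classical.decEq V
  (mergedGraph G u₁ u₂).deleteEdges
    {e' : Sym2 {v : V // v ≠ u₂} |
      ∃ p ∈ Ps, ∃ e ∈ p.edges,
        Sym2.map (fun v : V =>
          if hv : v = u₂ then (⟨u₁, hne⟩ : {v : V // v ≠ u₂}) else ⟨v, hv⟩) e = e'}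

/-- A tree decomposition of `G`. -/
structure TreeDecomp {V : Type*} (G : SimpleGraph V) where
  X : Type
  T : SimpleGraph X
  isTree : T.IsTree
  bag : X → Finset V
  mem_bag : ∀ v : V, ∃ x : X, v ∈ bag x
  edge_bag : ∀ u v : V, G.Adj u v → ∃ x : X, u ∈ bag x ∧ v ∈ bag x
  bag_connected : ∀ v : V, (T.induce {x : X | v ∈ bag x}).Connected

/-- The treewidth of `G`: the least `w` such that `G` has a tree decomposition all of whose
bags have size at most `w + 1`. -/
noncomputable def treewidth {V : Type*} (G : SimpleGraph V) : ℕ :=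
  sInf {w : ℕ | ∃ D : TreeDecomp G, ∀ x, (D.bag x).card ≤ w + 1}

/-- The bipartite subgraph `G[C_i, C_j]` of `G` spanned by the edges with one endpoint
coloured `i` and the other coloured `j`. -/
def bipSub {V : Type*} {n : ℕ} (G : SimpleGraph V) (f : V → Fin n) (i j : Fin n) :
    SimpleGraph V where
  Adj a b := G.Adj a b ∧ ((f a = i ∧ f b = j) ∨ (f a = j ∧ f b = i))
  symm := by
    constructor
    rintro a b ⟨h, h2⟩
    exact ⟨h.symm, h2.symm.imp (fun h => ⟨h.2, h.1⟩) (fun h => ⟨h.2, h.1⟩)⟩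
  loopless := ⟨fun a h => G.irrefl h.1⟩

lemma even_ncard_cycleNbrs {V : Type} [Fintype V] {G : SimpleGraph V} {v : V}
    (c : G.Walk v v) (hc : c.IsTrail) (u : V) :
    Even {w : V | s(u, w) ∈ c.edges}.ncard := by
  classical
  have h : Even (c.edges.countP fun e => u ∈ e) :=
    (hc.even_countP_edges_iff u).mpr (fun hvv => absurd rfl hvv)
  have hinj : Set.InjOn (fun w => s(u, w)) {w : V | s(u, w) ∈ c.edges} := by
    intro w hw w' hw' hww
    simp only [Sym2.eq, Sym2.rel_iff', Prod.mk.injEq, Prod.swap_prod_mk] at hww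
    rcases hww with ⟨-, rfl⟩ | ⟨rfl, rfl⟩
    · rfl
    · rfl
  have himg : (fun w => s(u, w)) '' {w : V | s(u, w) ∈ c.edges}
      = {e | e ∈ c.edges ∧ u ∈ e} := by
    ext e
    constructor
    · rintro ⟨w, hw, rfl⟩
      exact ⟨hw, Sym2.mem_mk_left u w⟩
    · rintro ⟨he, hu⟩
      obtain ⟨w, rfl⟩ := (Sym2.mem_iff_exists).mp hu
      exact ⟨w, he, rfl⟩
  have hcard : {w : V | s(u, w) ∈ c.edges}.ncard = {e | e ∈ c.edges ∧ u ∈ e}.ncard := by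
    rw [← himg, Set.ncard_image_of_injOn hinj]
  rw [hcard]
  have : {e | e ∈ c.edges ∧ u ∈ e} = ↑((c.edges.filter (fun e => u ∈ e)).toFinset) := by
    ext e; simp [List.mem_filter]
  rw [this, Set.ncard_coe_finset,
    List.toFinset_card_of_nodup (hc.edges_nodup.filter _),
    ← List.countP_eq_length_filter]
  exact h


lemma parity_key {V : Type} [Fintype V] {G : SimpleGraph V} {n : ℕ} {f : V → Fin n}
    {i j : Fin n} (hij : i ≠ j) {v : V}
    (c : (bipSub G f i j).Walk v v) (hc : c.IsCycle) (u : V) (k : Fin n) :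
    Nat.card {w : V // (G.deleteEdges {e | e ∈ c.edges}).Adj u w ∧ f w = k} % 2
      = Nat.card {w : V // G.Adj u w ∧ f w = k} % 2 := by
  classical
  set R : Set V := {w | s(u, w) ∈ c.edges ∧ f w = k} with hR
  have hbip : ∀ w, s(u, w) ∈ c.edges → (bipSub G f i j).Adj u w := by
    intro w hw
    have h2 := c.edges_subset_edgeSet hw
    rwa [SimpleGraph.mem_edgeSet] at h2
  have hRE : Even R.ncard := by
    by_cases h1 : (f u = i ∧ k = j) ∨ (f u = j ∧ k = i)
    · have : R = {w | s(u, w) ∈ c.edges} := by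
        ext w
        simp only [hR, Set.mem_setOf_eq, and_iff_left_iff_imp]
        intro hw
        rcases (hbip w hw : G.Adj u w ∧ ((f u = i ∧ f w = j) ∨ (f u = j ∧ f w = i))).2 with ⟨hu, hwj⟩ | ⟨hu, hwi⟩ <;>
          rcases h1 with ⟨hu', hk⟩ | ⟨hu', hk⟩
        · rw [hwj, hk]
        · exact absurd (hu' ▸ hu) hij.symm
        · exact absurd (hu' ▸ hu) hij
        · rw [hwi, hk]
      rw [this]
      exact even_ncard_cycleNbrs c hc.isTrail u
    · have : R = ∅ := by
        ext w
        simp only [hR, Set.mem_setOf_eq, Set.mem_empty_iff_false, iff_false, not_and]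
        intro hw hk
        rcases (hbip w hw : G.Adj u w ∧ ((f u = i ∧ f w = j) ∨ (f u = j ∧ f w = i))).2 with ⟨hu, hwj⟩ | ⟨hu, hwi⟩
        · exact h1 (Or.inl ⟨hu, hk.symm.trans hwj⟩)
        · exact h1 (Or.inr ⟨hu, hk.symm.trans hwi⟩)
      rw [this]; simp
  set O : Set V := {w | G.Adj u w ∧ f w = k} with hO
  have hRO : R ⊆ O := fun w hw => ⟨((hbip w hw.1 : G.Adj u w ∧ ((f u = i ∧ f w = j) ∨ (f u = j ∧ f w = i))).1), hw.2⟩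
  have hN : {w | (G.deleteEdges {e | e ∈ c.edges}).Adj u w ∧ f w = k} = O \ R := by
    ext w
    simp only [SimpleGraph.deleteEdges_adj, Set.mem_setOf_eq, Set.mem_diff, hO, hR]
    constructor
    · rintro ⟨⟨ha, hne⟩, hk⟩
      exact ⟨⟨ha, hk⟩, fun h => hne h.1⟩
    · rintro ⟨⟨ha, hk⟩, hne⟩
      exact ⟨⟨ha, fun h => hne ⟨h, hk⟩⟩, hk⟩
  have hc1 : Nat.card {w : V // (G.deleteEdges {e | e ∈ c.edges}).Adj u w ∧ f w = k}
      = (O \ R).ncard := by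
    rw [← hN]; exact Nat.card_coe_set_eq _
  have hc2 : Nat.card {w : V // G.Adj u w ∧ f w = k} = O.ncard := Nat.card_coe_set_eq _
  rw [hc1, hc2, Set.ncard_diff hRO]
  have hle : R.ncard ≤ O.ncard := Set.ncard_le_ncard hRO (Set.toFinite O)
  obtain ⟨m, hm⟩ := hRE
  omega


/-- Deleting the edges of a cycle of the bipartite subgraph `G[C_i, C_j]`
preserves being an `n`-oddomorphism. -/
theorem isOddomorphism_deleteEdges_cycle {V : Type} [Fintype V] (G : SimpleGraph V)
    (n : ℕ) (f : V → Fin n) (hf : IsOddomorphism G n f)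
    (i j : Fin n) (hij : i ≠ j)
    (v : V) (c : (bipSub G f i j).Walk v v) (hc : c.IsCycle) :
    IsOddomorphism (G.deleteEdges {e | e ∈ c.edges}) n f := by
  obtain ⟨hprop, hodd, hcls⟩ := hf
  have hadj : ∀ u w, (G.deleteEdges {e | e ∈ c.edges}).Adj u w → G.Adj u w :=
    fun u w h => (SimpleGraph.deleteEdges_adj.mp h).1
  have hFOdd : ∀ u, FOdd (G.deleteEdges {e | e ∈ c.edges}) f u ↔ FOdd G f u := by
    intro u
    constructor <;> intro h k hk <;> have := h k hk <;>
      have hp := parity_key hij c hc u k <;>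
      rw [Nat.odd_iff] at this ⊢ <;> omega
  have hFEven : ∀ u, FEven (G.deleteEdges {e | e ∈ c.edges}) f u ↔ FEven G f u := by
    intro u
    constructor <;> intro h k hk <;> have := h k hk <;>
      have hp := parity_key hij c hc u k <;>
      rw [Nat.even_iff] at this ⊢ <;> omega
  refine ⟨fun u w h => hprop u w (hadj u w h), fun u => ?_, fun k => ?_⟩
  · rcases hodd u with h | h
    · exact Or.inl ((hFOdd u).mpr h)
    · exact Or.inr ((hFEven u).mpr h)
  · have : ∀ u : V, (f u = k ∧ FOdd (G.deleteEdges {e | e ∈ c.edges}) f u) ↔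
        (f u = k ∧ FOdd G f u) := fun u => and_congr_right fun _ => hFOdd u
    rw [Nat.card_congr (Equiv.subtypeEquivRight this)]
    exact hcls k
end

section
/- The following two statements are equivalent: (i) for every positive integer n there exist non-isomorphic finite graphs H and H′ such that for every finite graph F, hom(F,H) ≠ hom(F,H′) implies that F contains K_n as an immersion; (ii) for every class M of finite graphs that is proper, immersion-closed, and union-closed, there exist non-isomorphic finite graphs G and H such that hom(K,G) = hom(K,H) for every K ∈ M. -/
open SimpleGraph

section ImmersionAux

open SimpleGraph

/-- Build an immersion from an injective map that sends edges to edges. -/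
lemma containsImmersion_of_embedding {V W : Type*} {G : SimpleGraph V} {H : SimpleGraph W}
    (f : W ↪ V) (hf : ∀ u v, H.Adj u v → G.Adj (f u) (f v)) :
    ContainsImmersion G H := by
  refine ⟨f, fun u v h => Walk.cons (hf u v h) Walk.nil, ?_, ?_⟩
  · intro u v h
    simp [Walk.isPath_def, (hf u v h).ne]
  · intro u v h u' v' h' hne e he he'
    simp only [Walk.edges_cons, Walk.edges_nil, List.mem_singleton] at he he'
    apply hne
    have : (s(f u, f v) : Sym2 V) = s(f u', f v') := he ▸ he'
    rw [← Sym2.map_pair_eq f, ← Sym2.map_pair_eq f] at this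
    exact Sym2.map.injective f.injective this

lemma containsImmersion_refl {V : Type*} (G : SimpleGraph V) : ContainsImmersion G G :=
  containsImmersion_of_embedding (Function.Embedding.refl V) (fun _ _ h => h)

/-- The walk in `G` obtained from a walk in `H` by concatenating the immersion paths. -/
def immLiftWalk {V W : Type*} {G : SimpleGraph V} {H : SimpleGraph W} (φ : W → V)
    (P : ∀ u v : W, H.Adj u v → G.Walk (φ u) (φ v)) :
    ∀ {a b : W}, H.Walk a b → G.Walk (φ a) (φ b)
  | _, _, .nil => Walk.nil
  | _, _, .cons h q => (P _ _ h).append (immLiftWalk φ P q)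

lemma edges_immLiftWalk {V W : Type*} {G : SimpleGraph V} {H : SimpleGraph W} (φ : W → V)
    (P : ∀ u v : W, H.Adj u v → G.Walk (φ u) (φ v)) {a b : W} (q : H.Walk a b)
    {e : Sym2 V} (he : e ∈ (immLiftWalk φ P q).edges) :
    ∃ u v, ∃ h : H.Adj u v, s(u, v) ∈ q.edges ∧ e ∈ (P u v h).edges := by
  induction q with
  | nil => simp [immLiftWalk] at he
  | cons h q ih =>
    rw [immLiftWalk, Walk.edges_append, List.mem_append] at he
    rcases he with he | he
    · exact ⟨_, _, h, by simp, he⟩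
    · obtain ⟨u, v, h', h1, h2⟩ := ih he
      exact ⟨u, v, h', by simp [h1], h2⟩

lemma containsImmersion_trans {V W X : Type*} {G : SimpleGraph V} {H : SimpleGraph W}
    {K : SimpleGraph X} (h1 : ContainsImmersion G H) (h2 : ContainsImmersion H K) :
    ContainsImmersion G K := by
  classical
  obtain ⟨φ, P, hPpath, hPdisj⟩ := h1
  obtain ⟨ψ, Q, hQpath, hQdisj⟩ := h2
  refine ⟨ψ.trans φ, fun u v h => (immLiftWalk φ P (Q u v h)).bypass,
    fun u v h => Walk.bypass_isPath _, ?_⟩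
  intro u v h u' v' h' hne e he he'
  replace he := Walk.edges_bypass_subset _ he
  replace he' := Walk.edges_bypass_subset _ he'
  obtain ⟨a, b, hab, haq, haP⟩ := edges_immLiftWalk φ P (Q u v h) he
  obtain ⟨a', b', hab', haq', haP'⟩ := edges_immLiftWalk φ P (Q u' v' h') he'
  by_cases hs : (s(a, b) : Sym2 W) = s(a', b')
  · exact hQdisj u v h u' v' h' hne _ haq (hs ▸ haq')
  · exact hPdisj a b hab a' b' hab' hs e haP haP'

lemma walk_sum_inl {α β : Type*} {G : SimpleGraph α} {H : SimpleGraph β} :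
    ∀ {x y : α ⊕ β} (p : (G ⊕g H).Walk x y) (a : α), x = Sum.inl a →
      ∃ b : α, y = Sum.inl b ∧ ∃ q : G.Walk a b,
        p.edges = q.edges.map (Sym2.map Sum.inl) ∧ p.support = q.support.map Sum.inl := by
  intro x y p
  induction p with
  | nil => rintro a rfl; exact ⟨a, rfl, Walk.nil, by simp, by simp⟩
  | @cons x z y hadj p ih =>
    rintro a rfl
    cases z with
    | inl c =>
      obtain ⟨b, rfl, q, hq1, hq2⟩ := ih c rfl
      have hac : G.Adj a c := by simpa using hadj
      exact ⟨b, rfl, Walk.cons hac q, by simp [hq1], by simp [hq2]⟩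
    | inr c => simp at hadj

/-- If the image of the distinguished vertex lies on the left, the whole immersion of the
complete graph lives on the left. -/
lemma containsImmersion_sum_left {α β : Type*} {G : SimpleGraph α} {H : SimpleGraph β}
    {n : ℕ} (hn : 1 ≤ n) (φ : Fin n ↪ α ⊕ β)
    (P : ∀ u v : Fin n, (completeGraph (Fin n)).Adj u v → (G ⊕g H).Walk (φ u) (φ v))
    (hPpath : ∀ u v h, (P u v h).IsPath)
    (hPdisj : ∀ u v (h : (completeGraph (Fin n)).Adj u v) u' v'
        (h' : (completeGraph (Fin n)).Adj u' v'),
      s(u, v) ≠ s(u', v') → ∀ e ∈ (P u v h).edges, e ∉ (P u' v' h').edges)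
    {v₀ : α} (hz : φ ⟨0, hn⟩ = Sum.inl v₀) :
    ContainsImmersion G (completeGraph (Fin n)) := by
  classical
  have hall : ∀ u : Fin n, ∃ a : α, φ u = Sum.inl a := by
    intro u
    by_cases hu : u = ⟨0, hn⟩
    · exact ⟨v₀, hu ▸ hz⟩
    · have hadj : (completeGraph (Fin n)).Adj ⟨0, hn⟩ u := fun h => hu h.symm
      obtain ⟨b, hb, -⟩ := walk_sum_inl (P ⟨0, hn⟩ u hadj) v₀ hz
      exact ⟨b, hb⟩
  set g : Fin n → α := fun u => (hall u).choose with hgdef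
  have hg : ∀ u, φ u = Sum.inl (g u) := fun u => (hall u).choose_spec
  have hginj : Function.Injective g := by
    intro u u' huu
    exact φ.injective ((hg u).trans (huu ▸ (hg u').symm))
  have hq : ∀ (u v : Fin n) (h : (completeGraph (Fin n)).Adj u v),
      ∃ q : G.Walk (g u) (g v),
        (P u v h).edges = q.edges.map (Sym2.map Sum.inl) ∧
        (P u v h).support = q.support.map Sum.inl := by
    intro u v h
    obtain ⟨b, hb, q, hq1, hq2⟩ := walk_sum_inl (P u v h) (g u) (hg u)
    have hbv : g v = b := Sum.inl.inj ((hg v).symm.trans hb)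
    subst hbv
    exact ⟨q, hq1, hq2⟩
  refine ⟨⟨g, hginj⟩, fun u v h => (hq u v h).choose, ?_, ?_⟩
  · intro u v h
    rw [Walk.isPath_def]
    have := (hPpath u v h)
    rw [Walk.isPath_def, (hq u v h).choose_spec.2] at this
    exact this.of_map _
  · intro u v h u' v' h' hne e he he'
    have h1 : Sym2.map Sum.inl e ∈ (P u v h).edges := by
      rw [(hq u v h).choose_spec.1]
      exact List.mem_map_of_mem he
    have h2 : Sym2.map Sum.inl e ∈ (P u' v' h').edges := by
      rw [(hq u' v' h').choose_spec.1]
      exact List.mem_map_of_mem he'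
    exact hPdisj u v h u' v' h' hne _ h1 h2

lemma containsImmersion_sum {α β : Type*} {G : SimpleGraph α} {H : SimpleGraph β}
    {n : ℕ} (hn : 1 ≤ n)
    (h : ContainsImmersion (G ⊕g H) (completeGraph (Fin n))) :
    ContainsImmersion G (completeGraph (Fin n)) ∨
      ContainsImmersion H (completeGraph (Fin n)) := by
  obtain ⟨φ, P, hPpath, hPdisj⟩ := h
  rcases hv : φ ⟨0, hn⟩ with v₀ | v₀
  · exact Or.inl (containsImmersion_sum_left hn φ P hPpath hPdisj hv)
  · right
    let e : (G ⊕g H) ≃g (H ⊕g G) := Iso.sumComm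
    refine containsImmersion_sum_left hn (φ.trans e.toEmbedding.toEmbedding)
      (fun u v h => (P u v h).map e.toHom) (fun u v h => ?_) ?_ (v₀ := v₀) ?_
    · exact Walk.map_isPath_of_injective e.injective (hPpath u v h)
    · intro u v h u' v' h' hne x hx hx'
      replace hx : x ∈ (P u v h).edges.map (Sym2.map e.toHom) := by
        rw [← Walk.edges_map]; exact hx
      replace hx' : x ∈ (P u' v' h').edges.map (Sym2.map e.toHom) := by
        rw [← Walk.edges_map]; exact hx'
      rw [List.mem_map] at hx hx'
      obtain ⟨a, ha, rfl⟩ := hx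
      obtain ⟨a', ha', haa⟩ := hx'
      have : a' = a := Sym2.map.injective e.injective haa
      exact hPdisj u v h u' v' h' hne a ha (this ▸ ha')
    · show e (φ ⟨0, hn⟩) = Sum.inl v₀
      rw [hv]
      rfl

end ImmersionAux

/-- The two statements are equivalent: (i) for every positive `n` there are
non-isomorphic finite graphs `H, H'` such that `hom(F,H) ≠ hom(F,H')` forces a
`K_n`-immersion in `F`; (ii) every proper, immersion-closed, union-closed class of finite
graphs fails to distinguish some pair of non-isomorphic finite graphs by homomorphism
counts. -/
theorem reduction_equivalence :
    (∀ n : ℕ, 1 ≤ n →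
      ∃ (V W : Type) (_ : Fintype V) (_ : Fintype W)
        (H : SimpleGraph V) (H' : SimpleGraph W),
        ¬ Nonempty (H ≃g H') ∧
        ∀ (U : Type) (_ : Fintype U) (F : SimpleGraph U),
          Nat.card (F →g H) ≠ Nat.card (F →g H') →
          ContainsImmersion F (completeGraph (Fin n)))
    ↔
    (∀ M : ∀ (V : Type), Fintype V → SimpleGraph V → Prop,
      (∃ (V : Type) (hV : Fintype V) (G : SimpleGraph V), ¬ M V hV G) →
      (∀ (V W : Type) (hV : Fintype V) (hW : Fintype W)
        (G : SimpleGraph V) (H : SimpleGraph W),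
        M V hV G → ContainsImmersion G H → M W hW H) →
      (∀ (V W : Type) (hV : Fintype V) (hW : Fintype W)
        (G : SimpleGraph V) (H : SimpleGraph W) (hVW : Fintype (V ⊕ W)),
        M V hV G → M W hW H → M (V ⊕ W) hVW (G ⊕g H)) →
      ∃ (V W : Type) (_ : Fintype V) (_ : Fintype W)
        (G : SimpleGraph V) (H : SimpleGraph W),
        ¬ Nonempty (G ≃g H) ∧
        ∀ (U : Type) (hU : Fintype U) (K : SimpleGraph U),
          M U hU K → Nat.card (K →g G) = Nat.card (K →g H)) := by
  
  constructor
  · intro hi M hproper himm hunion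
    obtain ⟨V, hV, G, hG⟩ := hproper
    set n : ℕ := @Fintype.card V hV + 1 with hn
    have hMn : ¬ M (Fin n) (Fin.fintype n) (completeGraph (Fin n)) := by
      intro hM
      apply hG
      refine himm (Fin n) V (Fin.fintype n) hV _ G hM ?_
      letI := hV
      have f : V ↪ Fin n :=
        (Fintype.equivFin V).toEmbedding.trans ⟨Fin.castSucc, Fin.castSucc_injective _⟩
      exact containsImmersion_of_embedding f (fun u v h hc => h.ne (f.injective hc))
    obtain ⟨V₁, W₁, hV₁, hW₁, Hg, Hg', hniso, hforce⟩ := hi n (Nat.le_add_left 1 _)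
    refine ⟨V₁, W₁, hV₁, hW₁, Hg, Hg', hniso, ?_⟩
    intro U hU K hK
    by_contra hne
    exact hMn (himm U (Fin n) hU (Fin.fintype n) K (completeGraph (Fin n)) hK
      (hforce U hU K hne))
  · intro hii n hn
    obtain ⟨V₁, W₁, hV₁, hW₁, Gg, Hg, hniso, heq⟩ :=
      hii (fun V _ G => ¬ ContainsImmersion G (completeGraph (Fin n)))
        ⟨Fin n, Fin.fintype n, completeGraph (Fin n),
          fun h => h (containsImmersion_refl _)⟩
        (fun V W hV hW G H hG hGH hH => hG (containsImmersion_trans hGH hH))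
        (fun V W hV hW G H hVW hG hH hsum =>
          (containsImmersion_sum hn hsum).elim hG hH)
    refine ⟨V₁, W₁, hV₁, hW₁, Gg, Hg, hniso, ?_⟩
    intro U hU F hne
    by_contra hF
    exact hne (heq U hU F hF)
end
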